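/- Let N ≥ 3 and let a : ℝ → (0,∞)^{2N} be a differentiable solution of the periodic Volterra lattice equations ȧ_j = a_j(a_{j+1} − a_{j−1}). Then the matrices L₁(a(t)) = Σ_{j=1}^{2N} (a_{j+1}(t) E_{j+1,j} + E_{j,j+1}) and A₁(a(t)) = Σ_{j=1}^{2N} ((a_j(t) + a_{j+1}(t)) E_{j,j} + E_{j,j+2}) satisfy the Lax equation d/dt L₁(a(t)) = A₁(a(t))·L₁(a(t)) − L₁(a(t))·A₁(a(t)) for all t. -/

import Mathlib

open Matrix

instance neZeroTwoMul (N : ℕ) [NeZero N] : NeZero (2 * N) :=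
  ⟨by have := NeZero.ne N; omega⟩

/-- `Emat N r s` is the `2N × 2N` real matrix with a `1` in position `(r, s)`
and zeros elsewhere, indices taken mod `2N`. -/
noncomputable def Emat (N : ℕ) [NeZero N] (r s : ZMod (2 * N)) :
    Matrix (ZMod (2 * N)) (ZMod (2 * N)) ℝ :=
  Matrix.single r s 1

/-- The classical Lax matrix `L₁(a) = ∑ j, (a_{j+1} E_{j+1,j} + E_{j,j+1})`. -/
noncomputable def LaxL1 (N : ℕ) [NeZero N] (a : ZMod (2 * N) → ℝ) :
    Matrix (ZMod (2 * N)) (ZMod (2 * N)) ℝ :=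
  ∑ j : ZMod (2 * N), (a (j + 1) • Emat N (j + 1) j + Emat N j (j + 1))

/-- The companion matrix `A₁(a) = ∑ j, ((a_j + a_{j+1}) E_{j,j} + E_{j,j+2})`. -/
noncomputable def LaxA1 (N : ℕ) [NeZero N] (a : ZMod (2 * N) → ℝ) :
    Matrix (ZMod (2 * N)) (ZMod (2 * N)) ℝ :=
  ∑ j : ZMod (2 * N), ((a j + a (j + 1)) • Emat N j j + Emat N j (j + 2))

/-!
Each row of `L₁` and of `A₁` has just two nonzero entries, on fixed cyclic diagonals, so row `i`
of `A₁ L₁ - L₁ A₁` is a short explicit combination of entries. Everything cancels except the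
entry at `(i, i - 1)`, which equals `a_i (a_{i+1} - a_{i-1})`: the Volterra velocity of `a_i`,
the only non-constant entry of `L₁` in that row.
-/

section BandMatrix

variable {ι R : Type*} [Fintype ι] [DecidableEq ι]

theorem Matrix.sum_single_add_add_apply [AddCommGroup ι] [AddCommMonoid R] (c : ι → R)
    (p q i k : ι) :
    (∑ j, single (j + p) (j + q) (c j)) i k = if k = i - p + q then c (i - p) else 0 := by
  rw [sum_apply, Finset.sum_eq_single (i - p)]
  · simp only [sub_add_cancel, single_apply, true_and, eq_comm]
  · intro j _ hj
    exact single_apply_of_row_ne (fun h => hj (eq_sub_of_add_eq h)) _ _ _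
  · simp

theorem Matrix.mul_apply_of_row_eq [NonAssocSemiring R] {M : Matrix ι ι R} {i u v : ι}
    {α β : R}
    (hM : ∀ m, M i m = (if m = u then α else 0) + (if m = v then β else 0))
    (X : Matrix ι ι R) (k : ι) :
    (M * X) i k = α * X u k + β * X v k := by
  simp only [mul_apply, hM, add_mul, ite_mul, zero_mul, Finset.sum_add_distrib,
    Finset.sum_ite_eq', Finset.mem_univ, if_true]

end BandMatrix

section Lax

variable {N : ℕ} [NeZero N] (a : ZMod (2 * N) → ℝ) (i k : ZMod (2 * N))

theorem LaxL1_apply :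
    LaxL1 N a i k = (if k = i - 1 then a i else 0) + (if k = i + 1 then 1 else 0) := by
  simp only [LaxL1, Emat, Finset.sum_add_distrib, Matrix.add_apply, smul_single, smul_eq_mul,
    mul_one]
  congr 1
  · simpa using sum_single_add_add_apply (fun j => a (j + 1)) 1 0 i k
  · simpa using sum_single_add_add_apply (fun _ => (1 : ℝ)) 0 1 i k

theorem LaxA1_apply :
    LaxA1 N a i k = (if k = i then a i + a (i + 1) else 0) + (if k = i + 2 then 1 else 0) := by
  simp only [LaxA1, Emat, Finset.sum_add_distrib, Matrix.add_apply, smul_single, smul_eq_mul,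
    mul_one]
  congr 1
  · simpa using sum_single_add_add_apply (fun j => a j + a (j + 1)) 0 0 i k
  · simpa using sum_single_add_add_apply (fun _ => (1 : ℝ)) 0 2 i k

theorem lie_LaxA1_LaxL1_apply :
    ⁅LaxA1 N a, LaxL1 N a⁆ i k = if k = i - 1 then a i * (a (i + 1) - a (i - 1)) else 0 := by
  rw [Ring.lie_def, Matrix.sub_apply, mul_apply_of_row_eq (LaxA1_apply a i),
    mul_apply_of_row_eq (LaxL1_apply a i)]
  have h₁ : i + 2 - 1 = i + 1 := by ring
  have h₂ : i + 2 + 1 = i + 1 + 2 := by ring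
  have h₃ : i - 1 + 2 = i + 1 := by ring
  have h₄ : i + 1 + 1 = i + 2 := by ring
  simp only [LaxL1_apply, LaxA1_apply, h₁, h₂, h₃, h₄, sub_add_cancel]
  split_ifs <;> ring

end Lax

theorem hasDerivAt_LaxL1_apply {N : ℕ} [NeZero N] {a : ℝ → ZMod (2 * N) → ℝ}
    {a' : ZMod (2 * N) → ℝ} {t : ℝ} (ha : ∀ j, HasDerivAt (fun s => a s j) (a' j) t)
    (i k : ZMod (2 * N)) :
    HasDerivAt (fun s => LaxL1 N (a s) i k) (if k = i - 1 then a' i else 0) t := by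
  simp only [LaxL1_apply]
  by_cases hk : k = i - 1
  · simpa only [if_pos hk] using (ha i).add_const _
  · simpa only [if_neg hk] using hasDerivAt_const t _

theorem volterra_lax_classical_general (N : ℕ) [NeZero N]
    (a : ℝ → ZMod (2 * N) → ℝ)
    (hvolt : ∀ t j, HasDerivAt (fun s => a s j) (a t j * (a t (j + 1) - a t (j - 1))) t) :
    ∀ t i j, HasDerivAt (fun s => LaxL1 N (a s) i j)
      ((LaxA1 N (a t) * LaxL1 N (a t) - LaxL1 N (a t) * LaxA1 N (a t)) i j) t := by
  intro t i j
  rw [← Ring.lie_def, lie_LaxA1_LaxL1_apply]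
  exact hasDerivAt_LaxL1_apply (hvolt t) i j

/-- For a differentiable positive solution of the periodic Volterra lattice, the
pair `(L₁, A₁)` satisfies the Lax equation `d/dt L₁(a(t)) = [A₁(a(t)), L₁(a(t))]`. -/
theorem volterra_lax_classical (N : ℕ) [NeZero N] (hN : 3 ≤ N)
    (a : ℝ → ZMod (2 * N) → ℝ)
    (hpos : ∀ t j, 0 < a t j)
    (hdiff : ∀ j, Differentiable ℝ fun t => a t j)
    (hvolt : ∀ t j, HasDerivAt (fun s => a s j) (a t j * (a t (j + 1) - a t (j - 1))) t) :
    ∀ t i j, HasDerivAt (fun s => LaxL1 N (a s) i j)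
      ((LaxA1 N (a t) * LaxL1 N (a t) - LaxL1 N (a t) * LaxA1 N (a t)) i j) t :=
  volterra_lax_classical_general N a hvolt
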